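/- Let p_s be a probabilistic model over Σ that terminates almost surely, and let A be a backoff-complete topology over Σ equipped with an initial state and transition function, with L(p_s) ⊆ L(A). Assume every count c(x,q) is finite and the series defining the KL divergences below are absolutely convergent, or else diverge to +∞ (in which case D is +∞). Suppose p₀ is an ε-companion distribution whose induced distribution satisfies p₀*(x|q) = c(x,q)/c(q) for every state q with c(q) > 0 and every x ∈ L*[q]. Then p₀ minimizes the KL divergence from p_s among all ε-companion distributions: for every ε-companion distribution p, D(p_s‖(p₀)_A) ≤ D(p_s‖p_A). -/

import Mathlib

open scoped BigOperators
open Classical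

noncomputable section

variable {α : Type*}

/-- Probability of reading the string `x` after history `h` under conditional model `p`,
where `p h x` is the probability of next symbol `x` given history `h`. -/
def probFrom (p : List α → α → ℝ) : List α → List α → ℝ
  | _, [] => 1
  | h, x :: t => p h x * probFrom p (h ++ [x]) t

/-- Probability assigned to the string `x`: `p(x₁⋯xₙ) = ∏ᵢ p(xᵢ | x₁⋯xᵢ₋₁)`. -/
def strProb (p : List α → α → ℝ) (x : List α) : ℝ := probFrom p [] x

/-- `p` is a probabilistic model over `α` with distinguished end symbol `dollar`. -/
structure IsProbModel [Fintype α] (dollar : α) (p : List α → α → ℝ) : Prop where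
  nonneg : ∀ h x, 0 ≤ p h x
  sum_one : ∀ h, dollar ∉ h → ∑ x, p h x = 1
  halt : ∀ h, dollar ∈ h → ∀ x, p h x = 0

/-- The language of a model: strings of positive probability ending in (a single) `dollar`. -/
def Lang (dollar : α) (p : List α → α → ℝ) : Set (List α) :=
  {x | 0 < strProb p x ∧ ∃ w, x = w ++ [dollar] ∧ dollar ∉ w}

/-- `p` terminates almost surely. -/
def TerminatesAS (dollar : α) (p : List α → α → ℝ) : Prop :=
  ∑' x : Lang dollar p, strProb p x = 1

/-- KL divergence between two sequence models (with the convention `0·log(0/0) = 0`,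
which holds definitionally here since `Real.log 0 = 0`). -/
def KLdiv (dollar : α) (ps pa : List α → α → ℝ) : ℝ :=
  ∑' x : Lang dollar ps, strProb ps x * Real.log (strProb ps x / strProb pa x)

variable {α : Type*} {Q : Type*}

/-- A backoff-complete topology over the alphabet `α` with states `Q`. -/
structure BackoffTopology (α : Type*) (Q : Type*) where
  supp : Q → Finset α
  bo : Q → Option Q
  rank : Q → ℕ
  rank_lt : ∀ q q', bo q = some q' → rank q' < rank q
  supp_sub : ∀ q q', bo q = some q' → supp q ⊆ supp q'
  supp_ssub : ∀ q q', bo q = some q' → bo q' = none → supp q ⊂ supp q'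

namespace BackoffTopology

/-- `iter n q` is the `n`-th state of the backoff chain of `q` (if it exists). -/
def iter (T : BackoffTopology α Q) : ℕ → Q → Option Q
  | 0, q => some q
  | n + 1, q => (T.iter n q).bind T.bo

/-- `L*[q]`: union of the label sets along the backoff chain of `q`. -/
def suppStar (T : BackoffTopology α Q) (q : Q) : Set α :=
  {x | ∃ n q', T.iter n q = some q' ∧ x ∈ T.supp q'}

/-- `q^x`: the first state of the backoff chain of `q` whose label set contains `x`. -/
def qx (T : BackoffTopology α Q) (q : Q) (x : α) : Option Q :=
  if h : ∃ n, ∃ q', T.iter n q = some q' ∧ x ∈ T.supp q'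
  then T.iter (Nat.find h) q
  else none

/-- `B(q)`: states whose backoff chain contains `q`. -/
def B [Fintype Q] (T : BackoffTopology α Q) (q : Q) : Finset Q :=
  Finset.univ.filter fun qa => ∃ n, T.iter n qa = some q

/-- `B₁(q)`: states backing off to `q` in one step. -/
def B1 [Fintype Q] (T : BackoffTopology α Q) (q : Q) : Finset Q :=
  Finset.univ.filter fun q₀ => T.bo q₀ = some q

end BackoffTopology

/-- An ε-companion distribution on a backoff-complete topology: `p q x` is `p(x|q)` and
`pphi q` is `p(φ|q)`. -/
structure Companion (T : BackoffTopology α Q) (ε : ℝ) where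
  p : Q → α → ℝ
  pphi : Q → ℝ
  p_ge : ∀ q, ∀ x ∈ T.supp q, ε ≤ p q x
  pphi_ge : ∀ q q', T.bo q = some q' → ε ≤ pphi q
  pphi_none : ∀ q, T.bo q = none → pphi q = 0
  total : ∀ q, (∑ x ∈ T.supp q, p q x) + pphi q = 1

namespace Companion

variable {T : BackoffTopology α Q} {ε : ℝ}

/-- `d(q₀,q) = 1 − Σ_{x∈L[q₀]} p(x|q)`, for `bo q₀ = q`. -/
def d (c : Companion T ε) (q₀ q : Q) : ℝ :=
  1 - ∑ x ∈ T.supp q₀, c.p q x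

/-- `alphaN n q = α(q, q″)` where `q″` is the `n`-th state of the backoff chain of `q`:
the product of `p(φ|s)/d(s,bo(s))` over the first `n` states `s` of the chain. -/
def alphaN (c : Companion T ε) : ℕ → Q → ℝ
  | 0, _ => 1
  | n + 1, q =>
    match T.bo q with
    | none => 1
    | some q' => c.pphi q / c.d q q' * c.alphaN n q'

/-- The induced distribution `p*(x|q) = α(q,q^x)·p(x|q^x)` for `x ∈ L*[q]`, else `0`. -/
def pStar (c : Companion T ε) (q : Q) (x : α) : ℝ :=
  if h : ∃ n, ∃ q', T.iter n q = some q' ∧ x ∈ T.supp q'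
  then c.alphaN (Nat.find h) q * c.p ((T.iter (Nat.find h) q).getD q) x
  else 0

end Companion

/-- `C(x,q) = Σ_{q_a ∈ B(q)} c(x,q_a)·1[q_a^x = q]` for `x ∈ Σ`. -/
def Cx [Fintype Q] (T : BackoffTopology α Q) (c : α → Q → ℝ) (x : α) (q : Q) : ℝ :=
  ∑ qa ∈ T.B q, if T.qx qa x = some q then c x qa else 0

/-- `C(φ,q) = Σ_{q_a ∈ B(q)} Σ_{x ∉ L[q]} c(x,q_a)`. -/
def Cphi [Fintype α] [Fintype Q] (T : BackoffTopology α Q) (c : α → Q → ℝ) (q : Q) : ℝ :=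
  ∑ qa ∈ T.B q, ∑ x : α, if x ∈ T.supp q then 0 else c x qa

variable {Q : Type*}

/-- Extended state map, processing a string from state `q`:
`q̂(h·x) = δ(q̂(h)^x, x)`, defined when `x ∈ L*[q̂(h)]`. -/
def qhatFrom (T : BackoffTopology α Q) (δ : Q → α → Q) : Q → List α → Option Q
  | q, [] => some q
  | q, x :: t =>
    match T.qx q x with
    | some q' => qhatFrom T δ (δ q' x) t
    | none => none

/-- Extended state map from the initial state `ι`. -/
def qhat (T : BackoffTopology α Q) (ι : Q) (δ : Q → α → Q) (h : List α) : Option Q :=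
  qhatFrom T δ ι h

/-- The probabilistic model `p_A` induced by a companion distribution `p`:
`p_A(x|h) = p*(x|q̂(h))` when `q̂(h)` is defined, and a fixed default distribution
otherwise. -/
def induced (T : BackoffTopology α Q) (ι : Q) (δ : Q → α → Q)
    (dflt : List α → α → ℝ) {ε : ℝ} (p : Companion T ε) : List α → α → ℝ :=
  fun h x =>
    match qhat T ι δ h with
    | some q => p.pStar q x
    | none => dflt h x

/-- Count `c(x,q) = Σ_{$-free h : q̂(h)=q} p_s(h)·p_s(x|h)`. -/
def countHat (dollar : α) (ps : List α → α → ℝ) (T : BackoffTopology α Q)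
    (ι : Q) (δ : Q → α → Q) (x : α) (q : Q) : ℝ :=
  ∑' h : {h : List α // dollar ∉ h ∧ qhat T ι δ h = some q}, strProb ps h.1 * ps h.1 x

/-- The KL-divergence series is either absolutely convergent or diverges to `+∞`. -/
def KLwf (dollar : α) (ps pa : List α → α → ℝ) : Prop :=
  (Summable fun x : Lang dollar ps =>
    strProb ps x * Real.log (strProb ps x / strProb pa x)) ∨
  Filter.Tendsto
    (fun s : Finset (Lang dollar ps) =>
      ∑ x ∈ s, strProb ps (x : List α) * Real.log (strProb ps x / strProb pa x))
    Filter.atTop Filter.atTop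

/-- Extended-real KL divergence: the value of the series when it is absolutely convergent,
and `+∞` otherwise. -/
def KLdivE (dollar : α) (ps pa : List α → α → ℝ) : EReal :=
  if Summable fun x : Lang dollar ps =>
      strProb ps x * Real.log (strProb ps x / strProb pa x)
  then ((KLdiv dollar ps pa : ℝ) : EReal)
  else ⊤

/-! ### Auxiliary lemmas -/

section Aux

open scoped ENNReal

theorem enn_tsum_le_of_sum_le {ι : Type*} {f : ι → ℝ≥0∞} {c : ℝ≥0∞}
    (h : ∀ s : Finset ι, ∑ i ∈ s, f i ≤ c) : ∑' i, f i ≤ c := by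
  rw [ENNReal.tsum_eq_iSup_sum]
  exact iSup_le h

variable {α : Type*}

theorem probFrom_nonneg {ps : List α → α → ℝ} (h0 : ∀ h x, 0 ≤ ps h x) :
    ∀ (t h : List α), 0 ≤ probFrom ps h t := by
  intro t
  induction t with
  | nil => intro h; simp [probFrom]
  | cons y t ih =>
    intro h
    simpa [probFrom] using mul_nonneg (h0 h y) (ih (h ++ [y]))

theorem probFrom_append {ps : List α → α → ℝ} :
    ∀ (t₁ t₂ h : List α),
      probFrom ps h (t₁ ++ t₂) = probFrom ps h t₁ * probFrom ps (h ++ t₁) t₂ := by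
  intro t₁
  induction t₁ with
  | nil => intro t₂ h; simp [probFrom]
  | cons y t ih =>
    intro t₂ h
    show ps h y * probFrom ps (h ++ [y]) (t ++ t₂) = _
    rw [ih t₂ (h ++ [y])]
    simp [probFrom, mul_assoc, List.append_assoc]

theorem strProb_append {ps : List α → α → ℝ} (u t : List α) :
    strProb ps (u ++ t) = strProb ps u * probFrom ps u t := by
  simpa [strProb] using probFrom_append (ps := ps) u t []

theorem strProb_snoc {ps : List α → α → ℝ} (u : List α) (x : α) :
    strProb ps (u ++ [x]) = strProb ps u * ps u x := by
  simp [strProb_append, probFrom]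

theorem strProb_nonneg {ps : List α → α → ℝ} (h0 : ∀ h x, 0 ≤ ps h x) (t : List α) :
    0 ≤ strProb ps t := probFrom_nonneg h0 t []

/-- Kraft-type inequality for finite prefix-antichains of suffixes. -/
theorem kraftAux [Fintype α] {dollar : α} {ps : List α → α → ℝ}
    (hps : IsProbModel dollar ps) :
    ∀ (n : ℕ) (T : Finset (List α)) (u : List α),
      (∀ t ∈ T, t.length ≤ n) →
      (∀ s ∈ T, ∀ t ∈ T, s <+: t → s = t) →
      ∑ t ∈ T, probFrom ps u t ≤ 1 := by
  intro n
  induction n with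
  | zero =>
    intro T u hlen _
    have hT : T ⊆ {([] : List α)} := by
      intro t ht
      simp only [Finset.mem_singleton]
      exact List.length_eq_zero_iff.1 (Nat.le_zero.1 (hlen t ht))
    calc ∑ t ∈ T, probFrom ps u t ≤ ∑ t ∈ {([] : List α)}, probFrom ps u t := by
          refine Finset.sum_le_sum_of_subset_of_nonneg hT ?_
          intro t _ _; exact probFrom_nonneg hps.nonneg t u
      _ = 1 := by simp [probFrom]
  | succ n ih =>
    intro T u hlen hanti
    have hcons : ∀ {t : List α} {a : α}, t.head? = some a → t = a :: t.tail := by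
      intro t a ht
      cases t with
      | nil => simp at ht
      | cons b t' => simp only [List.head?_cons, Option.some.injEq] at ht; simp [ht]
    by_cases hnil : ([] : List α) ∈ T
    · have hT : T = {([] : List α)} := by
        apply Finset.eq_singleton_iff_unique_mem.2
        exact ⟨hnil, fun t ht => (hanti _ hnil _ ht List.nil_prefix).symm⟩
      simp [hT, probFrom]
    · -- every element is nonempty; group by head
      have key : ∀ a : α, ∑ t ∈ T.filter (fun t => t.head? = some a), probFrom ps u t
          ≤ ps u a := by
        intro a
        have htail : ∀ t ∈ T.filter (fun t => t.head? = some a),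
            probFrom ps u t = ps u a * probFrom ps (u ++ [a]) t.tail := by
          intro t ht
          rcases Finset.mem_filter.1 ht with ⟨htT, hhead⟩
          conv_lhs => rw [hcons hhead]
          simp [probFrom]
        rw [Finset.sum_congr rfl htail, ← Finset.mul_sum]
        have hsum : ∑ t ∈ T.filter (fun t => t.head? = some a),
            probFrom ps (u ++ [a]) t.tail
            = ∑ t' ∈ (T.filter (fun t => t.head? = some a)).image List.tail,
              probFrom ps (u ++ [a]) t' := by
          rw [Finset.sum_image]
          intro s hs t ht hst
          rcases Finset.mem_filter.1 hs with ⟨_, hs2⟩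
          rcases Finset.mem_filter.1 ht with ⟨_, ht2⟩
          rw [hcons hs2, hcons ht2, hst]
        rw [hsum]
        have hle : ∑ t' ∈ (T.filter (fun t => t.head? = some a)).image List.tail,
            probFrom ps (u ++ [a]) t' ≤ 1 := by
          apply ih
          · intro t' ht'
            rcases Finset.mem_image.1 ht' with ⟨t, ht, rfl⟩
            rcases Finset.mem_filter.1 ht with ⟨htT, hh⟩
            have h2 := hlen t htT
            rw [hcons hh] at h2
            simp only [List.length_cons] at h2
            omega
          · intro s' hs' t' ht' hpre
            rcases Finset.mem_image.1 hs' with ⟨s, hs, rfl⟩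
            rcases Finset.mem_image.1 ht' with ⟨t, ht, rfl⟩
            rcases Finset.mem_filter.1 hs with ⟨hsT, hs2⟩
            rcases Finset.mem_filter.1 ht with ⟨htT, ht2⟩
            have hpre' : s <+: t := by
              rw [hcons hs2, hcons ht2]
              exact List.cons_prefix_cons.2 ⟨rfl, hpre⟩
            rw [hanti s hsT t htT hpre']
        calc ps u a * ∑ t' ∈ (T.filter (fun t => t.head? = some a)).image List.tail,
              probFrom ps (u ++ [a]) t' ≤ ps u a * 1 :=
              mul_le_mul_of_nonneg_left hle (hps.nonneg u a)
          _ = ps u a := mul_one _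
      have hfib : ∑ o : Option α, ∑ t ∈ T.filter (fun t => t.head? = o), probFrom ps u t
          = ∑ t ∈ T, probFrom ps u t := Finset.sum_fiberwise T (fun t => t.head?) _
      have hempty : T.filter (fun t => t.head? = none) = ∅ := by
        apply Finset.filter_eq_empty_iff.2
        intro t ht h
        exact hnil (List.head?_eq_none_iff.1 h ▸ ht)
      have hsum_le : ∑ a : α, ps u a ≤ 1 := by
        by_cases hd : dollar ∈ u
        · have : ∀ a, ps u a = 0 := hps.halt u hd
          simp [this]
        · exact le_of_eq (hps.sum_one u hd)
      calc ∑ t ∈ T, probFrom ps u t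
          = ∑ o : Option α, ∑ t ∈ T.filter (fun t => t.head? = o), probFrom ps u t :=
            hfib.symm
        _ = ∑ a : α, ∑ t ∈ T.filter (fun t => t.head? = some a), probFrom ps u t := by
            rw [Fintype.sum_option, hempty, Finset.sum_empty, zero_add]
        _ ≤ ∑ a : α, ps u a := Finset.sum_le_sum (fun a _ => key a)
        _ ≤ 1 := hsum_le


/-- Kraft inequality for an antichain of extensions of `u`. -/
theorem kraft [Fintype α] {dollar : α} {ps : List α → α → ℝ}
    (hps : IsProbModel dollar ps) (S : Finset (List α)) (u : List α)
    (hext : ∀ w ∈ S, u <+: w)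
    (hanti : ∀ s ∈ S, ∀ t ∈ S, s <+: t → s = t) :
    ∑ w ∈ S, strProb ps w ≤ strProb ps u := by
  have hrepr : ∀ w ∈ S, w = u ++ w.drop u.length := by
    intro w hw
    rcases hext w hw with ⟨r, hr⟩
    rw [← hr, List.drop_left]
  have hinj : ∀ s ∈ S, ∀ t ∈ S, s.drop u.length = t.drop u.length → s = t := by
    intro s hs t ht hdrop
    rw [hrepr s hs, hrepr t ht, hdrop]
  have hmap : ∑ w ∈ S, strProb ps w
      = ∑ t ∈ S.image (List.drop u.length), strProb ps (u ++ t) := by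
    rw [Finset.sum_image hinj]
    exact Finset.sum_congr rfl (fun w hw => by rw [← hrepr w hw])
  rw [hmap]
  have : ∑ t ∈ S.image (List.drop u.length), strProb ps (u ++ t)
      = strProb ps u * ∑ t ∈ S.image (List.drop u.length), probFrom ps u t := by
    rw [Finset.mul_sum]
    exact Finset.sum_congr rfl (fun t _ => strProb_append u t)
  rw [this]
  have hk : ∑ t ∈ S.image (List.drop u.length), probFrom ps u t ≤ 1 := by
    apply kraftAux hps ((S.image (List.drop u.length)).sup List.length)
    · exact fun t ht => Finset.le_sup ht
    · intro s' hs' t' ht' hpre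
      rcases Finset.mem_image.1 hs' with ⟨s, hs, rfl⟩
      rcases Finset.mem_image.1 ht' with ⟨t, ht, rfl⟩
      have : s <+: t := by
        rw [hrepr s hs, hrepr t ht]
        exact (List.prefix_append_right_inj u).2 hpre
      rw [hanti s hs t ht this]
  calc strProb ps u * ∑ t ∈ S.image (List.drop u.length), probFrom ps u t
      ≤ strProb ps u * 1 :=
        mul_le_mul_of_nonneg_left hk (strProb_nonneg hps.nonneg u)
    _ = strProb ps u := mul_one _

theorem lang_antichain {dollar : α} {ps : List α → α → ℝ}
    {w₁ w₂ : List α} (h1 : w₁ ∈ Lang dollar ps) (h2 : w₂ ∈ Lang dollar ps)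
    (hpre : w₁ <+: w₂) : w₁ = w₂ := by
  rcases h1.2 with ⟨v₁, rfl, hv₁⟩
  rcases h2.2 with ⟨v₂, rfl, hv₂⟩
  by_contra hne
  have hlt : (v₁ ++ [dollar]).length < (v₂ ++ [dollar]).length :=
    lt_of_le_of_ne hpre.length_le (fun h => hne (List.IsPrefix.eq_of_length hpre h))
  have hlen : (v₁ ++ [dollar]).length ≤ v₂.length := by
    simp only [List.length_append, List.length_singleton] at hlt ⊢
    omega
  have : (v₁ ++ [dollar]) <+: v₂ :=
    List.prefix_of_prefix_length_le hpre (List.prefix_append v₂ [dollar]) hlen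
  exact hv₂ (this.subset (by simp))

theorem summable_lang [Fintype α] {dollar : α} {ps : List α → α → ℝ}
    (hterm : TerminatesAS dollar ps) :
    Summable (fun w : Lang dollar ps => strProb ps ↑w) := by
  by_contra h
  have := tsum_eq_zero_of_not_summable h
  rw [TerminatesAS] at hterm
  rw [hterm] at this
  norm_num at this

theorem tsum_ofReal_lang [Fintype α] {dollar : α} {ps : List α → α → ℝ}
    (hps : IsProbModel dollar ps) (hterm : TerminatesAS dollar ps) :
    ∑' w : Lang dollar ps, ENNReal.ofReal (strProb ps ↑w) = 1 := by
  rw [← ENNReal.ofReal_tsum_of_nonneg (fun w => strProb_nonneg hps.nonneg _)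
    (summable_lang hterm)]
  rw [TerminatesAS] at hterm
  rw [hterm, ENNReal.ofReal_one]

/-- The ℝ≥0∞-mass of language strings extending `u`. -/
def langMass (dollar : α) (ps : List α → α → ℝ) (u : List α) : ℝ≥0∞ :=
  ∑' w : Lang dollar ps, (if u <+: (w : List α) then ENNReal.ofReal (strProb ps ↑w) else 0)

theorem langMass_le [Fintype α] {dollar : α} {ps : List α → α → ℝ}
    (hps : IsProbModel dollar ps) (u : List α) :
    langMass dollar ps u ≤ ENNReal.ofReal (strProb ps u) := by
  apply enn_tsum_le_of_sum_le
  intro s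
  classical
  set P : ↑(Lang dollar ps) → Prop := fun w => u <+: (w : List α) with hP
  have h1 : ∑ w ∈ s, (if u <+: (w : List α) then ENNReal.ofReal (strProb ps ↑w) else 0)
      = ∑ w ∈ s.filter P, ENNReal.ofReal (strProb ps ↑w) :=
    (Finset.sum_filter P _).symm
  rw [h1, ← ENNReal.ofReal_sum_of_nonneg (fun w _ => strProb_nonneg hps.nonneg _)]
  apply ENNReal.ofReal_le_ofReal
  have hk := kraft hps ((s.filter P).image Subtype.val) u
    (by
      intro w hw
      rcases Finset.mem_image.1 hw with ⟨w', hw', rfl⟩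
      exact (Finset.mem_filter.1 hw').2)
    (by
      intro w hw v hv hpre
      rcases Finset.mem_image.1 hw with ⟨w', _, rfl⟩
      rcases Finset.mem_image.1 hv with ⟨v', _, rfl⟩
      exact lang_antichain w'.2 v'.2 hpre)
  rw [Finset.sum_image (fun x _ y _ h => Subtype.ext h)] at hk
  exact hk

theorem mem_dropLast_of_lang_strict_prefix {dollar : α} {ps : List α → α → ℝ}
    {w u : List α} (hw : w ∈ Lang dollar ps) (hpre : w <+: u) (hne : w ≠ u) :
    dollar ∈ u.dropLast := by
  rcases hw.2 with ⟨v, rfl, hv⟩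
  have hlt : (v ++ [dollar]).length < u.length :=
    lt_of_le_of_ne hpre.length_le (fun h => hne (List.IsPrefix.eq_of_length hpre h))
  have hle : (v ++ [dollar]).length ≤ u.dropLast.length := by
    simp only [List.length_append, List.length_singleton, List.length_dropLast] at hlt ⊢
    omega
  have : (v ++ [dollar]) <+: u.dropLast :=
    List.prefix_of_prefix_length_le hpre (List.dropLast_prefix u) hle
  exact this.subset (by simp)

theorem langMass_ge [Fintype α] {dollar : α} {ps : List α → α → ℝ}
    (hps : IsProbModel dollar ps) (hterm : TerminatesAS dollar ps)
    (u : List α) (hu : dollar ∉ u.dropLast) :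
    ENNReal.ofReal (strProb ps u) ≤ langMass dollar ps u := by
  classical
  set P : ↑(Lang dollar ps) → Prop := fun w => u <+: (w : List α) with hP
  set r : ℝ≥0∞ := ENNReal.ofReal (strProb ps u) with hr
  set Mb : ℝ≥0∞ := ∑' w : Lang dollar ps,
      (if ¬ P w then ENNReal.ofReal (strProb ps ↑w) else 0) with hMb
  have hsplit : langMass dollar ps u + Mb = 1 := by
    rw [langMass, hMb, ← ENNReal.tsum_add]
    rw [← tsum_ofReal_lang hps hterm]
    apply tsum_congr
    intro w
    by_cases hw : P w
    · rw [if_pos hw, if_neg (not_not_intro hw), add_zero]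
    · rw [if_neg hw, if_pos hw, zero_add]
  have hr_le_one : r ≤ 1 := by
    rw [hr, ← ENNReal.ofReal_one]
    apply ENNReal.ofReal_le_ofReal
    have := kraft hps {u} [] (by simp) (by
      intro s hs t ht _
      simp only [Finset.mem_singleton] at hs ht
      rw [hs, ht])
    simpa [strProb, probFrom] using this
  have hMb_bound : Mb ≤ 1 - r := by
    apply enn_tsum_le_of_sum_le
    intro s
    have h1 : ∑ w ∈ s, (if ¬ P w then ENNReal.ofReal (strProb ps ↑w) else 0)
        = ∑ w ∈ s.filter (fun w => ¬ P w), ENNReal.ofReal (strProb ps ↑w) :=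
      (Finset.sum_filter _ _).symm
    rw [h1, ← ENNReal.ofReal_sum_of_nonneg (fun w _ => strProb_nonneg hps.nonneg _)]
    set S : Finset (List α) := (s.filter (fun w => ¬ P w)).image Subtype.val with hS
    have hu_not : u ∉ S := by
      intro hmem
      rcases Finset.mem_image.1 hmem with ⟨w', hw', hw'e⟩
      exact (Finset.mem_filter.1 hw').2 (by rw [hP]; exact hw'e ▸ List.prefix_refl u)
    have hkraft := kraft hps (insert u S) [] (fun w _ => List.nil_prefix)
      (by
        intro a ha b hb hpre
        rcases Finset.mem_insert.1 ha with rfl | ha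
        · rcases Finset.mem_insert.1 hb with rfl | hb
          · rfl
          · rcases Finset.mem_image.1 hb with ⟨w', hw', rfl⟩
            exact absurd hpre (Finset.mem_filter.1 hw').2
        · rcases Finset.mem_image.1 ha with ⟨w', hw', rfl⟩
          rcases Finset.mem_insert.1 hb with rfl | hb
          · by_contra hne
            exact hu (mem_dropLast_of_lang_strict_prefix w'.2 hpre hne)
          · rcases Finset.mem_image.1 hb with ⟨v', hv', rfl⟩
            exact lang_antichain w'.2 v'.2 hpre)
    rw [Finset.sum_insert hu_not] at hkraft
    have hS_eq : ∑ w ∈ S, strProb ps w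
        = ∑ w ∈ s.filter (fun w => ¬ P w), strProb ps ↑w := by
      rw [hS, Finset.sum_image (fun x _ y _ h => Subtype.ext h)]
    have hone : strProb ps ([] : List α) = 1 := by simp [strProb, probFrom]
    rw [hone, hS_eq] at hkraft
    calc ENNReal.ofReal (∑ w ∈ s.filter (fun w => ¬ P w), strProb ps ↑w)
        ≤ ENNReal.ofReal (1 - strProb ps u) := ENNReal.ofReal_le_ofReal (by linarith)
      _ = ENNReal.ofReal 1 - r := ENNReal.ofReal_sub 1 (strProb_nonneg hps.nonneg u)
      _ = 1 - r := by rw [ENNReal.ofReal_one]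
  have hMb_ne_top : Mb ≠ ⊤ :=
    ((hMb_bound.trans tsub_le_self).trans_lt ENNReal.one_lt_top).ne
  have hfin : Mb + r ≤ Mb + langMass dollar ps u := by
    calc Mb + r ≤ (1 - r) + r := add_le_add hMb_bound le_rfl
      _ = 1 := tsub_add_cancel_of_le hr_le_one
      _ = Mb + langMass dollar ps u := by rw [← hsplit, add_comm]
  exact (ENNReal.add_le_add_iff_left hMb_ne_top).1 hfin

theorem langMass_eq [Fintype α] {dollar : α} {ps : List α → α → ℝ}
    (hps : IsProbModel dollar ps) (hterm : TerminatesAS dollar ps)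
    (u : List α) (hu : dollar ∉ u.dropLast) :
    langMass dollar ps u = ENNReal.ofReal (strProb ps u) :=
  le_antisymm (langMass_le hps u) (langMass_ge hps hterm u hu)

theorem langMass_snoc_eq [Fintype α] {dollar : α} {ps : List α → α → ℝ}
    (hps : IsProbModel dollar ps) (hterm : TerminatesAS dollar ps)
    {h : List α} (hh : dollar ∉ h) (x : α) :
    langMass dollar ps (h ++ [x]) = ENNReal.ofReal (strProb ps h * ps h x) := by
  rw [langMass_eq hps hterm (h ++ [x]) (by rwa [List.dropLast_concat]), strProb_snoc]

theorem langMass_snoc_zero [Fintype α] {dollar : α} {ps : List α → α → ℝ}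
    {h : List α} (hh : dollar ∈ h) (x : α) :
    langMass dollar ps (h ++ [x]) = 0 := by
  rw [langMass]
  apply ENNReal.tsum_eq_zero.2
  intro w
  rw [if_neg]
  intro hpre
  rcases w.2.2 with ⟨v, hw, hv⟩
  have hhw : h <+: (w : List α) := (List.prefix_append h [x]).trans hpre
  have hlen : h.length ≤ v.length := by
    have hl := hpre.length_le
    rw [hw] at hl
    simp only [List.length_append, List.length_singleton] at hl
    omega
  have : h <+: v := by
    apply List.prefix_of_prefix_length_le hhw _ hlen
    rw [hw]
    exact List.prefix_append v [dollar]
  exact hv (this.subset hh)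

section PStar

variable {α : Type*} {Q : Type*} {T : BackoffTopology α Q} {ε : ℝ}

theorem iter_succ' (T : BackoffTopology α Q) (n : ℕ) (q : Q) :
    T.iter (n + 1) q = (T.bo q).bind (T.iter n) := by
  induction n generalizing q with
  | zero =>
    show (T.iter 0 q).bind T.bo = (T.bo q).bind (T.iter 0)
    cases hbo : T.bo q <;> simp [BackoffTopology.iter, hbo]
  | succ n ih =>
    show (T.iter (n+1) q).bind T.bo = _
    rw [ih]
    cases hbo : T.bo q with
    | none => simp
    | some q' => simp [BackoffTopology.iter]

theorem mem_suppStar_iff {x : α} {q : Q} :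
    x ∈ T.suppStar q ↔ ∃ n, ∃ q', T.iter n q = some q' ∧ x ∈ T.supp q' := Iff.rfl

theorem mem_suppStar_of_mem_supp {x : α} {q : Q} (hx : x ∈ T.supp q) :
    x ∈ T.suppStar q := ⟨0, q, rfl, hx⟩

theorem suppStar_step {x : α} {q q' : Q} (hbo : T.bo q = some q') :
    x ∈ T.suppStar q ↔ x ∈ T.supp q ∨ x ∈ T.suppStar q' := by
  constructor
  · rintro ⟨n, q'', hiter, hx⟩
    cases n with
    | zero =>
      left
      cases hiter; exact hx
    | succ m =>
      right
      rw [iter_succ' T m q, hbo] at hiter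
      exact ⟨m, q'', hiter, hx⟩
  · rintro (hx | ⟨m, q'', hiter, hx⟩)
    · exact mem_suppStar_of_mem_supp hx
    · refine ⟨m + 1, q'', ?_, hx⟩
      rw [iter_succ' T m q, hbo]
      exact hiter

theorem suppStar_of_bo_none {x : α} {q : Q} (hbo : T.bo q = none)
    (hx : x ∈ T.suppStar q) : x ∈ T.supp q := by
  rcases hx with ⟨n, q'', hiter, hx⟩
  cases n with
  | zero => cases hiter; exact hx
  | succ m => rw [iter_succ' T m q, hbo] at hiter; cases hiter

namespace Companion

theorem pStar_of_not_mem {c : Companion T ε} {x : α} {q : Q}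
    (hx : x ∉ T.suppStar q) : c.pStar q x = 0 := by
  rw [Companion.pStar]
  exact dif_neg hx

theorem pStar_of_mem_supp (c : Companion T ε) {x : α} {q : Q} (hx : x ∈ T.supp q) :
    c.pStar q x = c.p q x := by
  have hex : ∃ n, ∃ q', T.iter n q = some q' ∧ x ∈ T.supp q' := ⟨0, q, rfl, hx⟩
  rw [Companion.pStar, dif_pos hex]
  have h0 : Nat.find hex = 0 := (Nat.find_eq_zero hex).2 ⟨q, rfl, hx⟩
  rw [h0]
  show c.alphaN 0 q * c.p ((some q).getD q) x = c.p q x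
  rw [Companion.alphaN]
  simp

theorem d_ge (hε : 0 < ε) (c : Companion T ε) {q q' : Q} (hbo : T.bo q = some q') :
    ε ≤ c.d q q' := by
  have hsub : T.supp q ⊆ T.supp q' := T.supp_sub q q' hbo
  have hnn : ∀ x ∈ T.supp q', 0 ≤ c.p q' x := fun x hx => le_trans hε.le (c.p_ge q' x hx)
  have htot := c.total q'
  rw [Companion.d]
  cases hbo' : T.bo q' with
  | some q'' =>
    have hphi : ε ≤ c.pphi q' := c.pphi_ge q' q'' hbo'
    have hle : ∑ x ∈ T.supp q, c.p q' x ≤ ∑ x ∈ T.supp q', c.p q' x :=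
      Finset.sum_le_sum_of_subset_of_nonneg hsub (fun x hx _ => hnn x hx)
    linarith
  | none =>
    have hssub : T.supp q ⊂ T.supp q' := T.supp_ssub q q' hbo hbo'
    rcases Finset.exists_of_ssubset hssub with ⟨y, hy, hyn⟩
    have hle : ∑ x ∈ T.supp q, c.p q' x ≤ ∑ x ∈ T.supp q' \ {y}, c.p q' x := by
      apply Finset.sum_le_sum_of_subset_of_nonneg
      · intro z hz
        rw [Finset.mem_sdiff, Finset.mem_singleton]
        exact ⟨hssub.1 hz, fun h => hyn (h ▸ hz)⟩
      · intro x hx _; exact hnn x ((Finset.mem_sdiff.1 hx).1)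
    have hsdiff : ∑ x ∈ T.supp q' \ {y}, c.p q' x
        = ∑ x ∈ T.supp q', c.p q' x - c.p q' y := by
      rw [eq_sub_iff_add_eq, Finset.sum_sdiff_eq_sub (Finset.singleton_subset_iff.2 hy)]
      simp
    have hphi0 : c.pphi q' = 0 := c.pphi_none q' hbo'
    have hyge : ε ≤ c.p q' y := c.p_ge q' y hy
    linarith

theorem pStar_rec (hε : 0 < ε) (c : Companion T ε) {x : α} {q q' : Q}
    (hbo : T.bo q = some q') (hx : x ∉ T.supp q) :
    c.pStar q x = c.pphi q / c.d q q' * c.pStar q' x := by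
  by_cases hxs : x ∈ T.suppStar q
  · have hxs' : x ∈ T.suppStar q' := by
      rcases (suppStar_step hbo).1 hxs with h | h
      · exact absurd h hx
      · exact h
    have hex : ∃ n, ∃ q₀, T.iter n q = some q₀ ∧ x ∈ T.supp q₀ := hxs
    have hex' : ∃ n, ∃ q₀, T.iter n q' = some q₀ ∧ x ∈ T.supp q₀ := hxs'
    set m := Nat.find hex' with hm
    have hspec' := Nat.find_spec hex'
    have hfind : Nat.find hex = m + 1 := by
      have h1 : Nat.find hex ≤ m + 1 := by
        apply Nat.find_le
        rcases hspec' with ⟨q₀, hq₀, hxq₀⟩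
        refine ⟨q₀, ?_, hxq₀⟩
        rw [iter_succ' T m q, hbo]
        exact hq₀
      have h2 : m + 1 ≤ Nat.find hex := by
        have hne : Nat.find hex ≠ 0 := by
          intro h0
          rcases (Nat.find_eq_zero hex).1 h0 with ⟨q₀, hq₀, hxq₀⟩
          have hq₀' : some q = some q₀ := hq₀
          injection hq₀' with hq₀''
          exact hx (by rw [hq₀'']; exact hxq₀)
        rcases Nat.exists_eq_succ_of_ne_zero hne with ⟨k, hk⟩
        have hspec := Nat.find_spec hex
        rw [hk] at hspec
        rw [iter_succ' T k q, hbo] at hspec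
        have : m ≤ k := Nat.find_le hspec
        omega
      omega
    rw [Companion.pStar, dif_pos hex, Companion.pStar, dif_pos hex', hfind, ← hm]
    have hiter : T.iter (m + 1) q = T.iter m q' := by
      rw [iter_succ' T m q, hbo]
      rfl
    rw [hiter]
    rw [← hm] at hspec'
    rcases hspec' with ⟨q₀, hq₀, hxq₀⟩
    rw [hq₀]
    simp only [Option.getD_some]
    show (match T.bo q with
      | none => 1
      | some q'' => c.pphi q / c.d q q'' * c.alphaN m q'') * _ = _
    rw [hbo]
    ring
  · have hxs' : x ∉ T.suppStar q' := by
      intro h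
      exact hxs ((suppStar_step hbo).2 (Or.inr h))
    rw [pStar_of_not_mem hxs, pStar_of_not_mem hxs', mul_zero]

theorem sum_pStar_le_one [Fintype α] (hε : 0 < ε) (c : Companion T ε) (q : Q) :
    ∑ x : α, c.pStar q x ≤ 1 := by
  generalize hn : T.rank q = n
  induction n using Nat.strong_induction_on generalizing q with
  | _ n ih =>
  classical
  have hsupp_sum : ∑ x ∈ T.supp q, c.pStar q x = ∑ x ∈ T.supp q, c.p q x :=
    Finset.sum_congr rfl (fun x hx => c.pStar_of_mem_supp hx)
  have hsplit : ∑ x : α, c.pStar q x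
      = ∑ x ∈ Finset.univ \ T.supp q, c.pStar q x + ∑ x ∈ T.supp q, c.pStar q x :=
    (Finset.sum_sdiff (Finset.subset_univ (T.supp q))).symm
  cases hbo : T.bo q with
  | none =>
    have hzero : ∀ x ∈ Finset.univ \ T.supp q, c.pStar q x = 0 := by
      intro x hx
      apply pStar_of_not_mem
      intro hxs
      exact (Finset.mem_sdiff.1 hx).2 (suppStar_of_bo_none hbo hxs)
    rw [hsplit, Finset.sum_eq_zero hzero, zero_add, hsupp_sum]
    have := c.total q
    have := c.pphi_none q hbo
    linarith
  | some q' =>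
    have hrec : ∀ x ∈ Finset.univ \ T.supp q,
        c.pStar q x = c.pphi q / c.d q q' * c.pStar q' x := by
      intro x hx
      exact c.pStar_rec hε hbo (Finset.mem_sdiff.1 hx).2
    have hS' : ∑ x : α, c.pStar q' x ≤ 1 := by
      apply ih (T.rank q') _ q' rfl
      rw [← hn]
      exact T.rank_lt q q' hbo
    have hsplit' : ∑ x : α, c.pStar q' x
        = ∑ x ∈ Finset.univ \ T.supp q, c.pStar q' x + ∑ x ∈ T.supp q, c.pStar q' x :=
      (Finset.sum_sdiff (Finset.subset_univ (T.supp q))).symm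
    have hsupp' : ∑ x ∈ T.supp q, c.pStar q' x = ∑ x ∈ T.supp q, c.p q' x :=
      Finset.sum_congr rfl
        (fun x hx => c.pStar_of_mem_supp (T.supp_sub q q' hbo hx))
    have hd : ε ≤ c.d q q' := c.d_ge hε hbo
    have hdpos : 0 < c.d q q' := lt_of_lt_of_le hε hd
    have hphi : ε ≤ c.pphi q := c.pphi_ge q q' hbo
    have hkey : ∑ x ∈ Finset.univ \ T.supp q, c.pStar q' x
        = ∑ x : α, c.pStar q' x - (1 - c.d q q') := by
      have hdd : ∑ x ∈ T.supp q, c.p q' x = 1 - c.d q q' := by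
        rw [Companion.d]; ring
      rw [hsplit', hsupp', hdd]; ring
    rw [hsplit, Finset.sum_congr rfl hrec, ← Finset.mul_sum, hkey, hsupp_sum]
    have htot := c.total q
    have hb : c.pphi q / c.d q q' * (∑ x : α, c.pStar q' x - (1 - c.d q q'))
        ≤ c.pphi q / c.d q q' * c.d q q' := by
      apply mul_le_mul_of_nonneg_left _ (div_nonneg (by linarith) hdpos.le)
      linarith
    rw [div_mul_cancel₀ _ (ne_of_gt hdpos)] at hb
    linarith

theorem pStar_nonneg (hε : 0 < ε) (c : Companion T ε) (q : Q) (x : α) :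
    0 ≤ c.pStar q x := by
  by_cases hxs : x ∈ T.suppStar q
  · have hex : ∃ n, ∃ q₀, T.iter n q = some q₀ ∧ x ∈ T.supp q₀ := hxs
    rw [Companion.pStar, dif_pos hex]
    rcases Nat.find_spec hex with ⟨q₀, hq₀, hxq₀⟩
    rw [hq₀]
    have halpha : ∀ (n : ℕ) (q₁ : Q), 0 ≤ c.alphaN n q₁ := by
      intro n
      induction n with
      | zero => intro q₁; rw [Companion.alphaN]; norm_num
      | succ n ihn =>
        intro q₁
        rw [Companion.alphaN]
        cases hbo : T.bo q₁ with
        | none => norm_num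
        | some q' =>
          simp only
          have hphi : ε ≤ c.pphi q₁ := c.pphi_ge q₁ q' hbo
          have hd : ε ≤ c.d q₁ q' := c.d_ge hε hbo
          exact mul_nonneg (div_nonneg (by linarith) (by linarith)) (ihn q')
    exact mul_nonneg (halpha _ q) (le_trans hε.le (c.p_ge q₀ x hxq₀))
  · rw [pStar_of_not_mem hxs]

theorem pStar_le_one [Fintype α] (hε : 0 < ε) (c : Companion T ε) (q : Q) (x : α) :
    c.pStar q x ≤ 1 := by
  calc c.pStar q x ≤ ∑ y : α, c.pStar q y :=
        Finset.single_le_sum (fun y _ => c.pStar_nonneg hε q y) (Finset.mem_univ x)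
    _ ≤ 1 := c.sum_pStar_le_one hε q

theorem pStar_pos [Fintype α] (hε : 0 < ε) (c : Companion T ε) {q : Q} {x : α}
    (hxs : x ∈ T.suppStar q) : 0 < c.pStar q x := by
  rcases hxs with ⟨n, q₀, hiter, hxq₀⟩
  induction n generalizing q with
  | zero =>
    have hq : some q = some q₀ := hiter
    injection hq with hq'
    subst hq'
    rw [c.pStar_of_mem_supp hxq₀]
    exact lt_of_lt_of_le hε (c.p_ge q x hxq₀)
  | succ m ihm =>
    by_cases hx : x ∈ T.supp q
    · rw [c.pStar_of_mem_supp hx]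
      exact lt_of_lt_of_le hε (c.p_ge q x hx)
    · rw [iter_succ' T m q] at hiter
      cases hbo : T.bo q with
      | none => rw [hbo] at hiter; cases hiter
      | some q' =>
        rw [hbo] at hiter
        rw [c.pStar_rec hε hbo hx]
        have hphi : ε ≤ c.pphi q := c.pphi_ge q q' hbo
        have hd : ε ≤ c.d q q' := c.d_ge hε hbo
        exact mul_pos (div_pos (by linarith) (by linarith)) (ihm hiter)

theorem neg_log_pStar_nonneg [Fintype α] (hε : 0 < ε) (c : Companion T ε) (q : Q) (x : α) :
    0 ≤ -Real.log (c.pStar q x) := by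
  rw [neg_nonneg]
  exact Real.log_nonpos (c.pStar_nonneg hε q x) (c.pStar_le_one hε q x)

end Companion

end PStar

section Induced

variable {α : Type*} {Q : Type*}

/-- The per-split cost `-log p*(x|q̂(h))` as an `ℝ≥0∞` value. -/
def ellP (T : BackoffTopology α Q) (ι : Q) (δ : Q → α → Q) {ε : ℝ}
    (c : Companion T ε) : List α × α → ℝ≥0∞ :=
  fun pr =>
    match qhat T ι δ pr.1 with
    | some q => ENNReal.ofReal (-Real.log (c.pStar q pr.2))
    | none => 0

theorem induced_good [Fintype α] (T : BackoffTopology α Q) (ι : Q) (δ : Q → α → Q)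
    (dflt : List α → α → ℝ) {ε : ℝ} (hε : 0 < ε) (c : Companion T ε) :
    ∀ (t h : List α),
      (∀ (pre : List α) (y : α) (post : List α), t = pre ++ y :: post →
        ∃ q, qhat T ι δ (h ++ pre) = some q ∧ y ∈ T.suppStar q) →
      0 < probFrom (induced T ι δ dflt c) h t ∧
      probFrom (induced T ι δ dflt c) h t ≤ 1 ∧
      ENNReal.ofReal (-Real.log (probFrom (induced T ι δ dflt c) h t))
        = ∑' pr : List α × α,
            (if h <+: pr.1 ∧ pr.1 ++ [pr.2] <+: h ++ t then ellP T ι δ c pr else 0) := by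
  intro t
  induction t with
  | nil =>
    intro h _
    refine ⟨by norm_num [probFrom], by norm_num [probFrom], ?_⟩
    have hz : ∀ pr : List α × α,
        (if h <+: pr.1 ∧ pr.1 ++ [pr.2] <+: h ++ [] then ellP T ι δ c pr else 0) = 0 := by
      intro pr
      rw [if_neg]
      rintro ⟨h1, h2⟩
      rw [List.append_nil] at h2
      have l1 := h1.length_le
      have l2 := h2.length_le
      simp only [List.length_append, List.length_singleton] at l2
      omega
    rw [tsum_congr hz]
    simp [probFrom]
  | cons y t' ih =>
    intro h hcond
    rcases hcond [] y t' (by simp) with ⟨q, hq, hy⟩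
    rw [List.append_nil] at hq
    have hpa : induced T ι δ dflt c h y = c.pStar q y := by
      rw [induced]
      rw [hq]
    have hcond' : ∀ (pre : List α) (z : α) (post : List α), t' = pre ++ z :: post →
        ∃ q', qhat T ι δ ((h ++ [y]) ++ pre) = some q' ∧ z ∈ T.suppStar q' := by
      intro pre z post hpre
      have := hcond (y :: pre) z post (by rw [hpre]; simp)
      simpa [List.append_assoc] using this
    rcases ih (h ++ [y]) hcond' with ⟨hpos', hle', heq'⟩
    have hppos : 0 < c.pStar q y := c.pStar_pos hε hy
    have hple : c.pStar q y ≤ 1 := c.pStar_le_one hε q y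
    have hunfold : probFrom (induced T ι δ dflt c) h (y :: t')
        = c.pStar q y * probFrom (induced T ι δ dflt c) (h ++ [y]) t' := by
      rw [probFrom, hpa]
    refine ⟨by rw [hunfold]; exact mul_pos hppos hpos', ?_, ?_⟩
    · rw [hunfold]
      exact mul_le_one₀ hple hpos'.le hle'
    · rw [hunfold, Real.log_mul (ne_of_gt hppos) (ne_of_gt hpos'), neg_add,
        ENNReal.ofReal_add (by rw [neg_nonneg]; exact Real.log_nonpos hppos.le hple)
          (by rw [neg_nonneg]; exact Real.log_nonpos hpos'.le hle'), heq']
      classical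
      rw [ENNReal.tsum_eq_add_tsum_ite (f := fun pr : List α × α =>
        if h <+: pr.1 ∧ pr.1 ++ [pr.2] <+: h ++ y :: t' then ellP T ι δ c pr else 0)
        ((h, y) : List α × α)]
      have hhead : (if h <+: (h, y).1 ∧ (h, y).1 ++ [(h, y).2] <+: h ++ y :: t'
          then ellP T ι δ c (h, y) else 0) = ENNReal.ofReal (-Real.log (c.pStar q y)) := by
        rw [if_pos ⟨List.prefix_refl h, ⟨t', by simp⟩⟩]
        show (match qhat T ι δ h with
          | some q => ENNReal.ofReal (-Real.log (c.pStar q y))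
          | none => 0) = _
        rw [hq]
      rw [hhead]
      congr 1
      apply tsum_congr
      intro pr
      by_cases hpr : pr = (h, y)
      · subst hpr
        rw [if_pos rfl, if_neg]
        rintro ⟨h1, _⟩
        have := h1.length_le
        simp only [List.length_append, List.length_singleton] at this
        omega
      · rw [if_neg hpr]
        have hassoc : (h ++ [y]) ++ t' = h ++ y :: t' := by simp
        by_cases hc : h <+: pr.1 ∧ pr.1 ++ [pr.2] <+: h ++ y :: t'
        · rw [if_pos hc, if_pos]
          constructor
          · -- h ++ [y] <+: pr.1
            have hne : pr.1 ≠ h := by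
              intro he
              apply hpr
              have h2 := hc.2
              rw [he] at h2
              have : [pr.2] <+: y :: t' := (List.prefix_append_right_inj h).1 h2
              have : pr.2 = y := (List.cons_prefix_cons.1 this).1
              rw [Prod.ext_iff]
              exact ⟨he, this⟩
            have hlen : h.length < pr.1.length := by
              rcases lt_or_eq_of_le hc.1.length_le with h' | h'
              · exact h'
              · exact absurd (hc.1.eq_of_length h').symm hne
            have hp1 : pr.1 <+: h ++ y :: t' := (List.prefix_append pr.1 [pr.2]).trans hc.2
            have hp2 : h ++ [y] <+: h ++ y :: t' := ⟨t', by simp⟩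
            apply List.prefix_of_prefix_length_le hp2 hp1
            simp only [List.length_append, List.length_singleton]
            omega
          · rw [hassoc]
            exact hc.2
        · rw [if_neg hc, if_neg]
          intro hc'
          apply hc
          rw [hassoc] at hc'
          exact ⟨(List.prefix_append h [y]).trans hc'.1, hc'.2⟩

end Induced

section Fubini

variable {α : Type*} {Q : Type*}

/-- The total `ℝ≥0∞`-mass of `p_s(w)·(−log p_A(w))` over the language. -/
def Bmass [Fintype α] (dollar : α) (ps : List α → α → ℝ) (T : BackoffTopology α Q)
    (ι : Q) (δ : Q → α → Q) (dflt : List α → α → ℝ) {ε : ℝ} (c : Companion T ε) : ℝ≥0∞ :=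
  ∑' w : Lang dollar ps,
    ENNReal.ofReal (strProb ps ↑w * (-Real.log (strProb (induced T ι δ dflt c) ↑w)))

theorem Bmass_eq [Fintype α] [Fintype Q] (dollar : α) (ps : List α → α → ℝ)
    (hps : IsProbModel dollar ps) (hterm : TerminatesAS dollar ps)
    (T : BackoffTopology α Q) (ι : Q) (δ : Q → α → Q) (dflt : List α → α → ℝ)
    {ε : ℝ} (hε : 0 < ε) (c : Companion T ε)
    (hsubL : ∀ x ∈ Lang dollar ps, ∀ (h : List α) (y : α) (t : List α),
      x = h ++ y :: t → ∃ q : Q, qhat T ι δ h = some q ∧ y ∈ T.suppStar q)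
    (hcfin : ∀ (x : α) (q : Q),
      Summable fun h : {h : List α // dollar ∉ h ∧ qhat T ι δ h = some q} =>
        strProb ps h.1 * ps h.1 x) :
    Bmass dollar ps T ι δ dflt c
      = ∑ q : Q, ∑ x : α, ENNReal.ofReal (countHat dollar ps T ι δ x q)
          * ENNReal.ofReal (-Real.log (c.pStar q x)) := by
  classical
  -- Step A+B : rewrite each term of the language sum as a double sum over splits.
  have stepA : ∀ w : Lang dollar ps,
      ENNReal.ofReal (strProb ps ↑w * (-Real.log (strProb (induced T ι δ dflt c) ↑w)))
        = ∑' pr : List α × α,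
            (if pr.1 ++ [pr.2] <+: (w : List α) then
              ENNReal.ofReal (strProb ps ↑w) * ellP T ι δ c pr else 0) := by
    intro w
    have hcond : ∀ (pre : List α) (y : α) (post : List α),
        (w : List α) = pre ++ y :: post →
        ∃ q, qhat T ι δ (([] : List α) ++ pre) = some q ∧ y ∈ T.suppStar q := by
      intro pre y post hsplit
      simpa using hsubL ↑w w.2 pre y post hsplit
    rcases induced_good T ι δ dflt hε c (↑w) [] hcond with ⟨hpos, hle, heq⟩
    have hsp : strProb (induced T ι δ dflt c) ↑w
        = probFrom (induced T ι δ dflt c) [] ↑w := rfl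
    rw [ENNReal.ofReal_mul (strProb_nonneg hps.nonneg _), hsp, heq,
      ← ENNReal.tsum_mul_left]
    apply tsum_congr
    intro pr
    rw [mul_ite, mul_zero]
    refine if_congr ?_ rfl rfl
    constructor
    · rintro ⟨_, h2⟩; simpa using h2
    · intro h2; exact ⟨List.nil_prefix, by simpa using h2⟩
  rw [Bmass, tsum_congr stepA, ENNReal.tsum_comm]
  -- Step D+E : compute the inner sums via langMass.
  have stepD : ∀ pr : List α × α,
      (∑' w : Lang dollar ps,
        (if pr.1 ++ [pr.2] <+: (w : List α) then
          ENNReal.ofReal (strProb ps ↑w) * ellP T ι δ c pr else 0))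
      = ENNReal.ofReal (strProb ps pr.1 * ps pr.1 pr.2) * ellP T ι δ c pr := by
    intro pr
    have h1 : ∀ w : Lang dollar ps,
        (if pr.1 ++ [pr.2] <+: (w : List α) then
          ENNReal.ofReal (strProb ps ↑w) * ellP T ι δ c pr else 0)
        = (if pr.1 ++ [pr.2] <+: (w : List α) then
            ENNReal.ofReal (strProb ps ↑w) else 0) * ellP T ι δ c pr := by
      intro w
      rw [ite_mul, zero_mul]
    rw [tsum_congr h1, ENNReal.tsum_mul_right]
    congr 1
    by_cases hd : dollar ∈ pr.1
    · rw [show (∑' w : Lang dollar ps, (if pr.1 ++ [pr.2] <+: (w : List α) then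
          ENNReal.ofReal (strProb ps ↑w) else 0)) = langMass dollar ps (pr.1 ++ [pr.2])
          from rfl,
        langMass_snoc_zero hd, hps.halt pr.1 hd pr.2, mul_zero, ENNReal.ofReal_zero]
    · rw [show (∑' w : Lang dollar ps, (if pr.1 ++ [pr.2] <+: (w : List α) then
          ENNReal.ofReal (strProb ps ↑w) else 0)) = langMass dollar ps (pr.1 ++ [pr.2])
          from rfl,
        langMass_snoc_eq hps hterm hd pr.2]
  rw [tsum_congr stepD]
  -- Step F : split the product index.
  rw [ENNReal.tsum_prod']
  -- Step G+H : group histories by their state.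
  have key : ∀ x : α,
      (∑' h : List α, ENNReal.ofReal (strProb ps h * ps h x) * ellP T ι δ c (h, x))
      = ∑ q : Q, ENNReal.ofReal (countHat dollar ps T ι δ x q)
          * ENNReal.ofReal (-Real.log (c.pStar q x)) := by
    intro x
    set f : List α → ℝ≥0∞ :=
      fun h => ENNReal.ofReal (strProb ps h * ps h x) * ellP T ι δ c (h, x) with hf
    set g : List α → Option Q := fun h => qhat T ι δ h with hg
    have h1 : ∑' h : List α, f h
        = ∑' j : Σ o : Option Q, {h : List α // g h = o}, f ((Equiv.sigmaFiberEquiv g) j) :=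
      ((Equiv.sigmaFiberEquiv g).tsum_eq f).symm
    have h2 : ∑' j : Σ o : Option Q, {h : List α // g h = o}, f ((Equiv.sigmaFiberEquiv g) j)
        = ∑' o : Option Q, ∑' h : {h : List α // g h = o}, f ((Equiv.sigmaFiberEquiv g) ⟨o, h⟩) :=
      ENNReal.tsum_sigma' _
    have h2b : (∑' o : Option Q, ∑' h : {h : List α // g h = o},
          f ((Equiv.sigmaFiberEquiv g) ⟨o, h⟩))
        = ∑' o : Option Q, ∑' h : {h : List α // g h = o}, f ↑h :=
      tsum_congr (fun o => tsum_congr (fun h => rfl))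
    have h3 : ∑' o : Option Q, ∑' h : {h : List α // g h = o}, f ↑h
        = ∑ o : Option Q, ∑' h : {h : List α // g h = o}, f ↑h := tsum_fintype _
    rw [h1, h2, h2b, h3, Fintype.sum_option]
    have hnone : (∑' h : {h : List α // g h = none}, f ↑h) = 0 := by
      apply ENNReal.tsum_eq_zero.2
      intro h
      have hz : ellP T ι δ c (↑h, x) = 0 := by
        simp only [ellP, show qhat T ι δ ↑h = none from h.2]
      show ENNReal.ofReal (strProb ps ↑h * ps ↑h x) * ellP T ι δ c (↑h, x) = 0
      rw [hz, mul_zero]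
    rw [hnone, zero_add]
    apply Finset.sum_congr rfl
    intro q _
    have hconst : ∀ h : {h : List α // g h = some q},
        f ↑h = ENNReal.ofReal (strProb ps ↑h * ps ↑h x)
          * ENNReal.ofReal (-Real.log (c.pStar q x)) := by
      intro h
      show ENNReal.ofReal (strProb ps ↑h * ps ↑h x) * ellP T ι δ c (↑h, x) = _
      congr 1
      simp only [ellP, show qhat T ι δ ↑h = some q from h.2]
    rw [tsum_congr hconst, ENNReal.tsum_mul_right]
    congr 1
    -- now : ∑' over fiber = ofReal (countHat x q)
    have hofReal : ENNReal.ofReal (countHat dollar ps T ι δ x q)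
        = ∑' h : {h : List α // dollar ∉ h ∧ qhat T ι δ h = some q},
            ENNReal.ofReal (strProb ps h.1 * ps h.1 x) := by
      rw [countHat]
      exact ENNReal.ofReal_tsum_of_nonneg
        (fun h => mul_nonneg (strProb_nonneg hps.nonneg _) (hps.nonneg _ _)) (hcfin x q)
    rw [hofReal]
    have hA : (∑' h : {h : List α // g h = some q},
          ENNReal.ofReal (strProb ps ↑h * ps ↑h x))
        = ∑' h : List α, Set.indicator {h : List α | g h = some q}
            (fun h => ENNReal.ofReal (strProb ps h * ps h x)) h :=
      tsum_subtype {h : List α | g h = some q}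
        (fun h => ENNReal.ofReal (strProb ps h * ps h x))
    have hB : (∑' h : {h : List α // dollar ∉ h ∧ qhat T ι δ h = some q},
          ENNReal.ofReal (strProb ps h.1 * ps h.1 x))
        = ∑' h : List α, Set.indicator {h : List α | dollar ∉ h ∧ qhat T ι δ h = some q}
            (fun h => ENNReal.ofReal (strProb ps h * ps h x)) h :=
      tsum_subtype {h : List α | dollar ∉ h ∧ qhat T ι δ h = some q}
        (fun h => ENNReal.ofReal (strProb ps h * ps h x))
    rw [hA, hB]
    apply tsum_congr
    intro h
    by_cases hd : dollar ∈ h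
    · have hz : ENNReal.ofReal (strProb ps h * ps h x) = 0 := by
        rw [hps.halt h hd x, mul_zero, ENNReal.ofReal_zero]
      by_cases h1 : h ∈ {h : List α | g h = some q} <;>
        by_cases h2 : h ∈ {h : List α | dollar ∉ h ∧ qhat T ι δ h = some q} <;>
        simp [Set.indicator_apply, h1, h2, hz]
    · have hiff : h ∈ {h : List α | g h = some q}
          ↔ h ∈ {h : List α | dollar ∉ h ∧ qhat T ι δ h = some q} := by
        simp only [Set.mem_setOf_eq, hg]
        exact ⟨fun hq => ⟨hd, hq⟩, fun hq => hq.2⟩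
      by_cases h1 : h ∈ {h : List α | g h = some q}
      · rw [Set.indicator_of_mem h1, Set.indicator_of_mem (hiff.1 h1)]
      · rw [Set.indicator_of_notMem h1, Set.indicator_of_notMem (fun hc => h1 (hiff.2 hc))]
  -- finally swap the two finite sums and the outer tsums
  rw [ENNReal.tsum_comm]
  rw [tsum_congr (fun x => key x), tsum_fintype]
  rw [Finset.sum_comm]

end Fubini

section Gibbs

variable {α : Type*} {Q : Type*}

theorem countHat_nonneg [Fintype α] (dollar : α) (ps : List α → α → ℝ)
    (hps : IsProbModel dollar ps) (T : BackoffTopology α Q) (ι : Q) (δ : Q → α → Q)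
    (x : α) (q : Q) : 0 ≤ countHat dollar ps T ι δ x q :=
  tsum_nonneg (fun h => mul_nonneg (strProb_nonneg hps.nonneg _) (hps.nonneg _ _))

theorem countHat_supp [Fintype α] (dollar : α) (ps : List α → α → ℝ)
    (hps : IsProbModel dollar ps) (hterm : TerminatesAS dollar ps)
    (T : BackoffTopology α Q) (ι : Q) (δ : Q → α → Q)
    (hsubL : ∀ x ∈ Lang dollar ps, ∀ (h : List α) (y : α) (t : List α),
      x = h ++ y :: t → ∃ q : Q, qhat T ι δ h = some q ∧ y ∈ T.suppStar q)
    {x : α} {q : Q} (hpos : 0 < countHat dollar ps T ι δ x q) : x ∈ T.suppStar q := by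
  by_contra hxs
  have hzero : ∀ h : {h : List α // dollar ∉ h ∧ qhat T ι δ h = some q},
      strProb ps h.1 * ps h.1 x = 0 := by
    intro h
    by_contra hne
    have hpos' : 0 < strProb ps h.1 * ps h.1 x :=
      lt_of_le_of_ne (mul_nonneg (strProb_nonneg hps.nonneg _) (hps.nonneg _ _))
        (Ne.symm hne)
    have hM : langMass dollar ps (h.1 ++ [x]) ≠ 0 := by
      rw [langMass_snoc_eq hps hterm h.2.1 x]
      simp only [ne_eq, ENNReal.ofReal_eq_zero, not_le]
      exact hpos'
    have : ∃ w : Lang dollar ps, (if h.1 ++ [x] <+: (w : List α) then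
        ENNReal.ofReal (strProb ps ↑w) else 0) ≠ 0 := by
      by_contra hall
      push_neg at hall
      exact hM (by rw [langMass]; exact ENNReal.tsum_eq_zero.2 hall)
    rcases this with ⟨w, hw⟩
    have hpre : h.1 ++ [x] <+: (w : List α) := by
      by_contra hc
      exact hw (if_neg hc)
    rcases hpre with ⟨r, hr⟩
    have hsplit : (w : List α) = h.1 ++ x :: r := by rw [← hr]; simp
    rcases hsubL ↑w w.2 h.1 x r hsplit with ⟨q₁, hq₁, hx₁⟩
    have : q₁ = q := by
      have := h.2.2
      rw [hq₁] at this
      injection this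
    exact hxs (this ▸ hx₁)
  have : countHat dollar ps T ι δ x q = 0 := by
    rw [countHat, tsum_congr hzero, tsum_zero]
  rw [this] at hpos
  exact lt_irrefl 0 hpos

theorem gibbs_state [Fintype α] {T : BackoffTopology α Q} {ε : ℝ} (hε : 0 < ε)
    (p₀ p : Companion T ε) (q : Q) (cnt : α → ℝ)
    (hnn : ∀ x, 0 ≤ cnt x)
    (hsupp : ∀ x, 0 < cnt x → x ∈ T.suppStar q)
    (hopt_q : 0 < ∑ x : α, cnt x →
      ∀ x ∈ T.suppStar q, p₀.pStar q x = cnt x / ∑ x' : α, cnt x') :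
    ∑ x : α, cnt x * (-Real.log (p₀.pStar q x))
      ≤ ∑ x : α, cnt x * (-Real.log (p.pStar q x)) := by
  classical
  set cq : ℝ := ∑ x : α, cnt x with hcq
  have hcqnn : 0 ≤ cq := Finset.sum_nonneg (fun x _ => hnn x)
  rcases eq_or_lt_of_le hcqnn with hcq0 | hcqpos
  · -- all counts are zero
    have hall : ∀ x ∈ Finset.univ, cnt x = 0 := by
      intro x hx
      have := (Finset.sum_eq_zero_iff_of_nonneg (fun x _ => hnn x)).1 hcq0.symm
      exact this x hx
    have lz : ∀ f : α → ℝ, ∑ x : α, cnt x * f x = 0 := fun f =>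
      Finset.sum_eq_zero (fun x hx => by rw [hall x hx, zero_mul])
    rw [lz (fun x => -Real.log (p₀.pStar q x)), lz (fun x => -Real.log (p.pStar q x))]
  · set S : Finset α := Finset.univ.filter (fun x => cnt x ≠ 0) with hS
    have hSpos : ∀ x ∈ S, 0 < cnt x := by
      intro x hx
      exact lt_of_le_of_ne (hnn x) (Ne.symm (Finset.mem_filter.1 hx).2)
    have hSsupp : ∀ x ∈ S, x ∈ T.suppStar q := fun x hx => hsupp x (hSpos x hx)
    have hrestr : ∀ (f : α → ℝ), ∑ x : α, cnt x * f x = ∑ x ∈ S, cnt x * f x := by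
      intro f
      rw [hS, Finset.sum_filter]
      apply Finset.sum_congr rfl
      intro x _
      by_cases hx : cnt x = 0 <;> simp [hx]
    rw [hrestr (fun x => -Real.log (p₀.pStar q x)), hrestr (fun x => -Real.log (p.pStar q x))]
    have hcS : ∑ x ∈ S, cnt x = cq := by
      rw [hcq, hS, Finset.sum_filter]
      apply (Finset.sum_congr rfl _).symm
      intro x _
      by_cases hx : cnt x = 0 <;> simp [hx]
    -- rewrite p₀.pStar on S
    have hp₀ : ∀ x ∈ S, p₀.pStar q x = cnt x / cq :=
      fun x hx => hopt_q hcqpos x (hSsupp x hx)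
    -- key pointwise bound
    have hkey : ∀ x ∈ S,
        cnt x * (Real.log (p.pStar q x) - Real.log (cnt x / cq))
          ≤ cq * p.pStar q x - cnt x := by
      intro x hx
      have hcx : 0 < cnt x := hSpos x hx
      have hpp : 0 < p.pStar q x := p.pStar_pos hε (hSsupp x hx)
      have ht : 0 < p.pStar q x * cq / cnt x := by positivity
      have hlog := Real.log_le_sub_one_of_pos ht
      have hexp : Real.log (p.pStar q x * cq / cnt x)
          = Real.log (p.pStar q x) - Real.log (cnt x / cq) := by
        rw [Real.log_div (by positivity) (ne_of_gt hcx), Real.log_mul (ne_of_gt hpp)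
          (ne_of_gt hcqpos), Real.log_div (ne_of_gt hcx) (ne_of_gt hcqpos)]
        ring
      rw [hexp] at hlog
      have := mul_le_mul_of_nonneg_left hlog hcx.le
      calc cnt x * (Real.log (p.pStar q x) - Real.log (cnt x / cq))
          ≤ cnt x * (p.pStar q x * cq / cnt x - 1) := this
        _ = cq * p.pStar q x - cnt x := by
            field_simp
    have hsum_p : ∑ x ∈ S, p.pStar q x ≤ 1 := by
      calc ∑ x ∈ S, p.pStar q x ≤ ∑ x : α, p.pStar q x :=
            Finset.sum_le_sum_of_subset_of_nonneg (Finset.subset_univ S)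
              (fun x _ _ => p.pStar_nonneg hε q x)
        _ ≤ 1 := p.sum_pStar_le_one hε q
    have hmain : ∑ x ∈ S, cnt x * (Real.log (p.pStar q x) - Real.log (cnt x / cq)) ≤ 0 := by
      calc ∑ x ∈ S, cnt x * (Real.log (p.pStar q x) - Real.log (cnt x / cq))
          ≤ ∑ x ∈ S, (cq * p.pStar q x - cnt x) := Finset.sum_le_sum hkey
        _ = cq * (∑ x ∈ S, p.pStar q x) - cq := by
            rw [Finset.sum_sub_distrib, ← Finset.mul_sum, hcS]
        _ ≤ cq * 1 - cq := by
            have := mul_le_mul_of_nonneg_left hsum_p hcqnn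
            linarith
        _ = 0 := by ring
    have hfinal : ∑ x ∈ S, cnt x * (-Real.log (cnt x / cq))
        ≤ ∑ x ∈ S, cnt x * (-Real.log (p.pStar q x)) := by
      have : ∑ x ∈ S, cnt x * (Real.log (p.pStar q x) - Real.log (cnt x / cq))
          = ∑ x ∈ S, cnt x * (-Real.log (cnt x / cq))
            - ∑ x ∈ S, cnt x * (-Real.log (p.pStar q x)) := by
        rw [← Finset.sum_sub_distrib]
        apply Finset.sum_congr rfl
        intro x _
        ring
      linarith [hmain, this.symm.le]
    calc ∑ x ∈ S, cnt x * (-Real.log (p₀.pStar q x))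
        = ∑ x ∈ S, cnt x * (-Real.log (cnt x / cq)) := by
          apply Finset.sum_congr rfl
          intro x hx
          rw [hp₀ x hx]
      _ ≤ ∑ x ∈ S, cnt x * (-Real.log (p.pStar q x)) := hfinal

end Gibbs

end Aux

/-- **Lemma 3 of the paper.** An ε-companion distribution `p₀` whose induced
distribution equals the normalized counts `c(x,q)/c(q)` on every state with `c(q) > 0`
minimizes the KL divergence from `p_s` among all ε-companion distributions. -/
theorem phi_exact_kl_min [Fintype α] [Fintype Q] (dollar : α)
    (ps : List α → α → ℝ) (hps : IsProbModel dollar ps) (hterm : TerminatesAS dollar ps)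
    (T : BackoffTopology α Q) (ι : Q) (δ : Q → α → Q) {ε : ℝ} (hε : 0 < ε)
    (dflt : List α → α → ℝ)
    (hdflt0 : ∀ h x, 0 ≤ dflt h x) (hdflt1 : ∀ h, ∑ x : α, dflt h x = 1)
    (hsubL : ∀ x ∈ Lang dollar ps, ∀ (h : List α) (y : α) (t : List α),
      x = h ++ y :: t → ∃ q : Q, qhat T ι δ h = some q ∧ y ∈ T.suppStar q)
    (hcfin : ∀ (x : α) (q : Q),
      Summable fun h : {h : List α // dollar ∉ h ∧ qhat T ι δ h = some q} =>
        strProb ps h.1 * ps h.1 x)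
    (hwf : ∀ p : Companion T ε, KLwf dollar ps (induced T ι δ dflt p))
    (p₀ : Companion T ε)
    (hopt : ∀ q : Q, 0 < ∑ x : α, countHat dollar ps T ι δ x q →
      ∀ x ∈ T.suppStar q,
        p₀.pStar q x
          = countHat dollar ps T ι δ x q / ∑ x' : α, countHat dollar ps T ι δ x' q) :
    ∀ p : Companion T ε,
      KLdivE dollar ps (induced T ι δ dflt p₀) ≤ KLdivE dollar ps (induced T ι δ dflt p) := by
  intro p
  classical
  set Nr : Companion T ε → ℝ := fun c => ∑ q : Q, ∑ x : α,
      countHat dollar ps T ι δ x q * (-Real.log (c.pStar q x)) with hNrdef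
  have hcnt_nn : ∀ (x : α) (q : Q), 0 ≤ countHat dollar ps T ι δ x q :=
    fun x q => countHat_nonneg dollar ps hps T ι δ x q
  have hNr_nonneg : ∀ c : Companion T ε, 0 ≤ Nr c := by
    intro c
    apply Finset.sum_nonneg; intro q _
    apply Finset.sum_nonneg; intro x _
    exact mul_nonneg (hcnt_nn x q) (c.neg_log_pStar_nonneg hε q x)
  have hB_oR : ∀ c : Companion T ε,
      Bmass dollar ps T ι δ dflt c = ENNReal.ofReal (Nr c) := by
    intro c
    rw [Bmass_eq dollar ps hps hterm T ι δ dflt hε c hsubL hcfin, hNrdef]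
    rw [ENNReal.ofReal_sum_of_nonneg (fun q _ => Finset.sum_nonneg (fun x _ =>
      mul_nonneg (hcnt_nn x q) (c.neg_log_pStar_nonneg hε q x)))]
    apply Finset.sum_congr rfl; intro q _
    rw [ENNReal.ofReal_sum_of_nonneg (fun x _ =>
      mul_nonneg (hcnt_nn x q) (c.neg_log_pStar_nonneg hε q x))]
    apply Finset.sum_congr rfl; intro x _
    rw [ENNReal.ofReal_mul (hcnt_nn x q)]
  have hgood : ∀ (c : Companion T ε) (w : Lang dollar ps),
      0 < strProb (induced T ι δ dflt c) ↑w ∧ strProb (induced T ι δ dflt c) ↑w ≤ 1 := by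
    intro c w
    have hcond : ∀ (pre : List α) (y : α) (post : List α),
        (w : List α) = pre ++ y :: post →
        ∃ q, qhat T ι δ (([] : List α) ++ pre) = some q ∧ y ∈ T.suppStar q := by
      intro pre y post hsplit
      simpa using hsubL ↑w w.2 pre y post hsplit
    rcases induced_good T ι δ dflt hε c (↑w) [] hcond with ⟨h1, h2, _⟩
    exact ⟨h1, h2⟩
  have hg_nn : ∀ (c : Companion T ε) (w : Lang dollar ps),
      0 ≤ strProb ps ↑w * (-Real.log (strProb (induced T ι δ dflt c) ↑w)) := by
    intro c w
    apply mul_nonneg (strProb_nonneg hps.nonneg _)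
    rw [neg_nonneg]
    exact Real.log_nonpos (hgood c w).1.le (hgood c w).2
  have hgsum : ∀ c : Companion T ε,
      Summable (fun w : Lang dollar ps =>
        strProb ps ↑w * (-Real.log (strProb (induced T ι δ dflt c) ↑w))) ∧
      (∑' w : Lang dollar ps,
        strProb ps ↑w * (-Real.log (strProb (induced T ι δ dflt c) ↑w))) = Nr c := by
    intro c
    have hB : (∑' w : Lang dollar ps, ENNReal.ofReal
        (strProb ps ↑w * (-Real.log (strProb (induced T ι δ dflt c) ↑w))))
        = ENNReal.ofReal (Nr c) := by
      have := hB_oR c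
      rw [Bmass] at this
      exact this
    have hne : (∑' w : Lang dollar ps, ENNReal.ofReal
        (strProb ps ↑w * (-Real.log (strProb (induced T ι δ dflt c) ↑w)))) ≠ ⊤ := by
      rw [hB]; exact ENNReal.ofReal_ne_top
    constructor
    · have := ENNReal.summable_toReal hne
      apply this.congr
      intro w
      rw [ENNReal.toReal_ofReal (hg_nn c w)]
    · have h2 : (∑' w : Lang dollar ps,
          strProb ps ↑w * (-Real.log (strProb (induced T ι δ dflt c) ↑w)))
          = ∑' w : Lang dollar ps, (ENNReal.ofReal
            (strProb ps ↑w * (-Real.log (strProb (induced T ι δ dflt c) ↑w)))).toReal :=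
        tsum_congr (fun w => (ENNReal.toReal_ofReal (hg_nn c w)).symm)
      rw [h2, ← ENNReal.tsum_toReal_eq (fun w => ENNReal.ofReal_ne_top), hB,
        ENNReal.toReal_ofReal (hNr_nonneg c)]
  have hsplitKL : ∀ (c : Companion T ε) (w : Lang dollar ps),
      strProb ps ↑w * Real.log (strProb ps ↑w / strProb (induced T ι δ dflt c) ↑w)
        = strProb ps ↑w * Real.log (strProb ps ↑w)
          + strProb ps ↑w * (-Real.log (strProb (induced T ι δ dflt c) ↑w)) := by
    intro c w
    rw [Real.log_div (ne_of_gt w.2.1) (ne_of_gt (hgood c w).1)]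
    ring
  have hGibbs : Nr p₀ ≤ Nr p := by
    apply Finset.sum_le_sum
    intro q _
    exact gibbs_state hε p₀ p q (fun x => countHat dollar ps T ι δ x q)
      (fun x => hcnt_nn x q)
      (fun x hx => countHat_supp dollar ps hps hterm T ι δ hsubL hx) (hopt q)
  by_cases hsf : Summable (fun w : Lang dollar ps =>
      strProb ps ↑w * Real.log (strProb ps ↑w))
  · have hSc : ∀ c : Companion T ε, Summable (fun w : Lang dollar ps =>
        strProb ps ↑w * Real.log (strProb ps ↑w / strProb (induced T ι δ dflt c) ↑w)) := by
      intro c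
      apply Summable.congr (hsf.add (hgsum c).1)
      intro w
      exact (hsplitKL c w).symm
    simp only [KLdivE]
    rw [if_pos (hSc p₀), if_pos (hSc p)]
    apply EReal.coe_le_coe_iff.2
    have hval : ∀ c : Companion T ε, KLdiv dollar ps (induced T ι δ dflt c)
        = (∑' w : Lang dollar ps, strProb ps ↑w * Real.log (strProb ps ↑w)) + Nr c := by
      intro c
      rw [KLdiv, tsum_congr (hsplitKL c), Summable.tsum_add hsf (hgsum c).1, (hgsum c).2]
    rw [hval p₀, hval p]
    linarith [hGibbs]
  · have hNSc : ∀ c : Companion T ε, ¬ Summable (fun w : Lang dollar ps =>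
        strProb ps ↑w * Real.log (strProb ps ↑w / strProb (induced T ι δ dflt c) ↑w)) := by
      intro c hsum
      apply hsf
      have hh := hsum.sub (hgsum c).1
      apply hh.congr
      intro w
      rw [hsplitKL c w]; ring
    simp only [KLdivE]
    rw [if_neg (hNSc p₀), if_neg (hNSc p)]

end
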